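/- arXiv:1212.6937 — 6 statements merged into one kernel-verified Lean document; each statement's English description precedes it below -/
import Mathlib

section
/- If E is a countably infinite set, then there exist at least continuum many pairwise non-equivalent (under ≈) functions from E to ℕ. Concretely, taking E = ℕ \ {0} and for I ⊆ ℕ defining f_I(n) = max{n_i : i ∈ I} where n = p_1^{n_1} p_2^{n_2} ⋯ is the prime factorization (p_i the i-th prime), the functions f_I for distinct I ⊆ ℕ are pairwise non-equivalent under ≈. -/
/-- A correction function: non-decreasing `α : ℕ → ℕ` with `n ≤ α n`. -/
def IsCorrection (α : ℕ → ℕ) : Prop := Monotone α ∧ ∀ n, n ≤ α n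

/-- Domination for ℕ-valued functions: `f ≼ g`. -/
def Dom {E : Type*} (f g : E → ℕ) : Prop :=
  ∃ α : ℕ → ℕ, IsCorrection α ∧ ∀ x, f x ≤ α (g x)

/-- Equivalence `f ≈ g`. -/
def Equi {E : Type*} (f g : E → ℕ) : Prop := Dom f g ∧ Dom g f

/-- The set `E = ℕ \ {0}`. -/
def Epos : Type := {n : ℕ // n ≠ 0}

/-- `f_I (n) = max { n_i : i ∈ I }` where `n = p₁^{n₁} p₂^{n₂} ⋯` is the prime
factorization and `p_i` is the `i`-th prime (`Nat.nth Nat.Prime`). -/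
noncomputable def fI (I : Set ℕ) : Epos → ℕ := fun n =>
  sSup ((fun i => (Nat.factorization n.1) (Nat.nth Nat.Prime i)) '' I)

lemma prime_nth (i : ℕ) : Nat.Prime (Nat.nth Nat.Prime i) :=
  Nat.nth_mem_of_infinite Nat.infinite_setOf_prime i

lemma nth_inj : Function.Injective (Nat.nth Nat.Prime) :=
  Nat.nth_injective Nat.infinite_setOf_prime

lemma fI_pow_self (I : Set ℕ) (i : ℕ) (hi : i ∈ I) (k : ℕ) :
    fI I ⟨(Nat.nth Nat.Prime i) ^ k, pow_ne_zero _ (prime_nth i).pos.ne'⟩ = k := by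
  unfold fI
  have hfac : ∀ j : ℕ,
      (Nat.factorization ((Nat.nth Nat.Prime i) ^ k)) (Nat.nth Nat.Prime j)
        = if i = j then k else 0 := by
    intro j
    rw [(prime_nth i).factorization_pow, Finsupp.single_apply]
    by_cases h : i = j
    · simp [h]
    · rw [if_neg h, if_neg (fun he => h (nth_inj he))]
  apply le_antisymm
  · apply csSup_le
    · exact ⟨_, Set.mem_image_of_mem _ hi⟩
    · rintro x ⟨j, _, rfl⟩
      simp only [hfac]
      split <;> omega
  · apply le_csSup
    · refine ⟨k, ?_⟩
      rintro x ⟨j, _, rfl⟩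
      simp only [hfac]; split <;> omega
    · refine ⟨i, hi, ?_⟩
      simp [hfac]

lemma fI_pow_notmem (J : Set ℕ) (i : ℕ) (hi : i ∉ J) (k : ℕ) :
    fI J ⟨(Nat.nth Nat.Prime i) ^ k, pow_ne_zero _ (prime_nth i).pos.ne'⟩ = 0 := by
  unfold fI
  have : ((fun j => (Nat.factorization ((Nat.nth Nat.Prime i) ^ k)) (Nat.nth Nat.Prime j)) '' J)
      ⊆ {0} := by
    rintro x ⟨j, hj, rfl⟩
    have hij : i ≠ j := fun h => hi (h ▸ hj)
    simp only [Set.mem_singleton_iff]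
    rw [(prime_nth i).factorization_pow, Finsupp.single_apply,
      if_neg (fun he => hij (nth_inj he))]
  rcases Set.subset_singleton_iff_eq.mp this with h | h
  · rw [h]; exact csSup_empty
  · rw [h]; exact csSup_singleton 0

lemma not_dom (I J : Set ℕ) (i : ℕ) (hi : i ∈ I) (hj : i ∉ J) : ¬ Dom (fI I) (fI J) := by
  rintro ⟨α, ⟨hmono, hle⟩, h⟩
  have h1 := h ⟨(Nat.nth Nat.Prime i) ^ (α 0 + 1), pow_ne_zero _ (prime_nth i).pos.ne'⟩
  rw [fI_pow_self I i hi, fI_pow_notmem J i hj] at h1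
  omega

/-- The functions `f_I` for distinct `I ⊆ ℕ` are pairwise non-equivalent under `≈`;
hence there are at least continuum many pairwise non-equivalent functions `E → ℕ`
for a countably infinite set `E`. -/
theorem continuum_many_cost_functions :
    (∀ I J : Set ℕ, I ≠ J → ¬ Equi (fI I) (fI J)) ∧
    (∃ F : Set ℕ → (Epos → ℕ), ∀ I J : Set ℕ, I ≠ J → ¬ Equi (F I) (F J)) := by
  have main : ∀ I J : Set ℕ, I ≠ J → ¬ Equi (fI I) (fI J) := by
    intro I J hne ⟨hd1, hd2⟩
    have hns : ¬ (I ⊆ J ∧ J ⊆ I) := fun ⟨a, b⟩ => hne (a.antisymm b)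
    rcases not_and_or.mp hns with h | h
    · obtain ⟨i, hiI, hiJ⟩ := Set.not_subset.mp h
      exact not_dom I J i hiI hiJ hd1
    · obtain ⟨i, hiJ, hiI⟩ := Set.not_subset.mp h
      exact not_dom J I i hiJ hiI hd2
  exact ⟨main, fI, main⟩
end

section
/- Let S be a stabilisation semigroup and e, f idempotents with e 𝒥 f. Then e^♯ 𝒥 f^♯. Moreover, if e = x·f·y for some x, y, then e^♯ = x·f^♯·y. -/
/-!
Suppose `e = x f y` and `f ≤_𝒥 e`, and put `a = e x f`, `b = f y e`. Then `a b = e`, while `b a` is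
an idempotent that is `ℛ`-below `f` and `𝒥`-above it; finite monoids are stable, so `b a = f`.
Consistency gives `e^♯ = (a b)^♯ = a (b a)^♯ b = a f^♯ b`, and since `x f = a`, `f y = b` and
`f f^♯ f = f^♯`, this is `x f^♯ y`. Applied in both directions it gives `e^♯ 𝒥 f^♯`.
-/

/-- Green's `≤_𝒥` relation: `a = x·b·y` for some `x, y ∈ S¹`. -/
def Jle {S : Type*} [Semigroup S] (a b : S) : Prop :=
  ∃ x y : WithOne S, (a : WithOne S) = x * (b : WithOne S) * y

/-- Green's `𝒥` relation. -/
def Jrel {S : Type*} [Semigroup S] (a b : S) : Prop := Jle a b ∧ Jle b a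

/-- Axioms of a stabilisation semigroup (finite ordered semigroup with a
stabilisation map on idempotents). -/
structure IsStabSemigroup (S : Type*) [Semigroup S] [PartialOrder S] [Fintype S]
    (stab : S → S) : Prop where
  mul_mono : ∀ a a' b b' : S, a ≤ a' → b ≤ b' → a * b ≤ a' * b'
  stab_idem : ∀ e : S, e * e = e → stab e * stab e = stab e
  stab_mono : ∀ e f : S, e * e = e → f * f = f → e ≤ f → stab e ≤ stab f
  stab_consistent : ∀ a b : S, (a * b) * (a * b) = a * b → (b * a) * (b * a) = b * a →
    stab (a * b) = a * (stab (b * a) * b)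
  stab_le : ∀ e : S, e * e = e → stab e ≤ e
  stab_stab : ∀ e : S, e * e = e → stab (stab e) = stab e

section Monoid

variable {M : Type*} [Monoid M]

theorem eq_pow_mul_mul_pow_of_eq_mul_mul {a p q : M} (h : a = p * a * q) (n : ℕ) :
    a = p ^ n * a * q ^ n := by
  induction n with
  | zero => simp
  | succ n ih =>
    calc a = p * a * q := h
      _ = p * (p ^ n * a * q ^ n) * q := by rw [← ih]
      _ = p ^ (n + 1) * a * q ^ (n + 1) := by
        rw [pow_succ' p, pow_succ q]; simp only [mul_assoc]

theorem exists_eq_mul_pow_succ_of_eq_mul_mul [Finite M] {a p q : M} (h : a = p * a * q) :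
    ∃ k : ℕ, a = a * q ^ (k + 1) := by
  obtain ⟨i, j, hij, hp⟩ := Set.finite_univ.exists_lt_map_eq_of_forall_mem
    (f := fun n : ℕ => p ^ n) fun _ => Set.mem_univ _
  obtain ⟨k, rfl⟩ := Nat.exists_eq_add_of_lt hij
  refine ⟨k, ?_⟩
  calc a = p ^ (i + k + 1) * a * q ^ (i + k + 1) := eq_pow_mul_mul_pow_of_eq_mul_mul h _
    _ = (p ^ i * a * q ^ i) * q ^ (k + 1) := by
      rw [← hp, add_assoc, pow_add q]; simp only [mul_assoc]
    _ = a * q ^ (k + 1) := by rw [← eq_pow_mul_mul_pow_of_eq_mul_mul h i]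

/-- Finite monoids are stable: `a ≤_ℛ b` together with `b ≤_𝒥 a` forces `b ≤_ℛ a`. -/
theorem exists_eq_mul_of_eq_mul_of_eq_mul_mul [Finite M] {a b s p q : M} (hab : a = b * s)
    (hba : b = p * a * q) : ∃ c, b = a * c := by
  obtain ⟨k, hk⟩ := exists_eq_mul_pow_succ_of_eq_mul_mul (a := b) (p := p) (q := s * q)
    (by rwa [← mul_assoc, mul_assoc p b s, ← hab])
  exact ⟨q * (s * q) ^ k, by rw [hab, mul_assoc b, ← mul_assoc s, ← pow_succ']; exact hk⟩

theorem mul_eq_of_mul_eq_of_eq_mul_mul [Finite M] {a b e f u v : M} (hab : a * b = e)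
    (he : IsIdempotentElem e) (hbe : b * e = b) (hfb : f * b = b) (haf : a * f = a)
    (huv : f = u * e * v) : b * a = f := by
  have hidem : b * a * (b * a) = b * a := by rw [mul_assoc, ← mul_assoc a, hab, ← mul_assoc, hbe]
  have hf : f = u * a * (b * a) * (b * v) := by
    rw [huv, ← he.eq, ← hab]; simp only [mul_assoc]
  obtain ⟨c, hc⟩ := exists_eq_mul_of_eq_mul_of_eq_mul_mul (b := f) (s := b * a)
    (by rw [← mul_assoc, hfb]) hf
  calc b * a = b * a * f := by rw [mul_assoc, haf]
    _ = b * a * c := by rw [hc, ← mul_assoc, hidem]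
    _ = f := hc.symm

variable {e f x y : M}

theorem IsIdempotentElem.mul_mul_mul_mul_eq (he : IsIdempotentElem e) (hf : IsIdempotentElem f)
    (hxy : e = x * f * y) : e * x * f * (f * y * e) = e := by
  calc e * x * f * (f * y * e) = e * (x * (f * f) * y) * e := by simp only [mul_assoc]
    _ = e := by rw [hf.eq, ← hxy, he.eq, he.eq]

theorem IsIdempotentElem.mul_mul_mul_mul_eq_of_eq_mul_mul [Finite M] (he : IsIdempotentElem e)
    (hf : IsIdempotentElem f) (hxy : e = x * f * y) {u v : M} (huv : f = u * e * v) :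
    f * y * e * (e * x * f) = f :=
  mul_eq_of_mul_eq_of_eq_mul_mul (he.mul_mul_mul_mul_eq hf hxy) he
    (by rw [mul_assoc, he.eq]) (by rw [← mul_assoc, ← mul_assoc, hf.eq])
    (by rw [mul_assoc, hf.eq]) huv

end Monoid

instance WithOne.instFinite {S : Type*} [Finite S] : Finite (WithOne S) :=
  inferInstanceAs (Finite (Option S))

theorem WithOne.exists_coe_eq_coe_mul_mul_coe {S : Type*} [Semigroup S] (a b : S)
    (x : WithOne S) : ∃ c : S, (c : WithOne S) = a * x * b := by
  induction x using WithOne.recOneCoe with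
  | one => exact ⟨a * b, by simp⟩
  | coe z => exact ⟨a * z * b, by simp⟩

theorem WithOne.isIdempotentElem_coe {S : Type*} [Semigroup S] {e : S} (he : e * e = e) :
    IsIdempotentElem (e : WithOne S) := by
  rw [IsIdempotentElem, ← WithOne.coe_mul, he]

namespace IsStabSemigroup

variable {S : Type*} [Semigroup S] [PartialOrder S] [Fintype S] {stab : S → S}

theorem mul_stab_mul (h : IsStabSemigroup S stab) {f : S} (hf : f * f = f) :
    f * stab f * f = stab f := by
  simpa only [hf, mul_assoc] using (h.stab_consistent f f (by rw [hf, hf]) (by rw [hf, hf])).symm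

theorem coe_stab_eq_mul_mul (h : IsStabSemigroup S stab) {e f : S} (he : e * e = e)
    (hf : f * f = f) (hfe : Jle f e) {x y : WithOne S}
    (hxy : (e : WithOne S) = x * (f : WithOne S) * y) :
    (stab e : WithOne S) = x * (stab f : WithOne S) * y := by
  have hE := WithOne.isIdempotentElem_coe he
  have hF := WithOne.isIdempotentElem_coe hf
  obtain ⟨u, v, huv⟩ := hfe
  obtain ⟨a, ha⟩ := WithOne.exists_coe_eq_coe_mul_mul_coe e f x
  obtain ⟨b, hb⟩ := WithOne.exists_coe_eq_coe_mul_mul_coe f e y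
  have hab : a * b = e := WithOne.coe_injective <| by
    rw [WithOne.coe_mul, ha, hb, hE.mul_mul_mul_mul_eq hF hxy]
  have hba : b * a = f := WithOne.coe_injective <| by
    rw [WithOne.coe_mul, ha, hb, hE.mul_mul_mul_mul_eq_of_eq_mul_mul hF hxy huv]
  have hxf : x * (f : WithOne S) = a := by
    rw [← hba, WithOne.coe_mul, ha, hb]
    simp only [← mul_assoc, ← hxy, hE.eq]
  have hfy : (f : WithOne S) * y = b := by
    rw [← hba, WithOne.coe_mul, ha, hb]
    simp only [mul_assoc]
    rw [← mul_assoc x, ← hxy]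
    simp only [← mul_assoc, hE.eq]
  calc (stab e : WithOne S) = a * (stab f : WithOne S) * b := by
        rw [← hab, h.stab_consistent a b (by rwa [hab]) (by rwa [hba]), hba, ← mul_assoc,
          WithOne.coe_mul, WithOne.coe_mul]
    _ = x * ((f * stab f * f : S) : WithOne S) * y := by
        rw [← hxf, ← hfy]; push_cast; simp only [mul_assoc]
    _ = x * (stab f : WithOne S) * y := by rw [h.mul_stab_mul hf]

end IsStabSemigroup

/-- If `e 𝒥 f` are idempotents of a stabilisation semigroup, then `e^♯ 𝒥 f^♯`;
moreover if `e = x·f·y` then `e^♯ = x·f^♯·y`. -/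
theorem stab_preserves_J {S : Type*} [Semigroup S] [PartialOrder S] [Fintype S]
    (stab : S → S) (h : IsStabSemigroup S stab)
    (e f : S) (he : e * e = e) (hf : f * f = f) (hJ : Jrel e f) :
    Jrel (stab e) (stab f) ∧
    ∀ x y : WithOne S, (e : WithOne S) = x * (f : WithOne S) * y →
      (stab e : WithOne S) = x * (stab f : WithOne S) * y := by
  refine ⟨⟨?_, ?_⟩, fun x y => h.coe_stab_eq_mul_mul he hf hJ.2⟩
  · obtain ⟨x, y, hxy⟩ := hJ.1
    exact ⟨x, y, h.coe_stab_eq_mul_mul he hf hJ.2 hxy⟩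
  · obtain ⟨u, v, huv⟩ := hJ.2
    exact ⟨u, v, h.coe_stab_eq_mul_mul hf he hJ.1 huv⟩
end

section
/- In a stabilisation semigroup, if J is a stable regular 𝒥-class (i.e., e^♯ ∈ J for idempotents e ∈ J), then e^♯ = e for all idempotents e ∈ J. -/
/-- In a finite monoid, some positive power of any element is idempotent. -/
lemma exists_idem_pow {M : Type*} [Monoid M] [Finite M] (s : M) :
    ∃ N, 0 < N ∧ s ^ N * s ^ N = s ^ N := by
  obtain ⟨a, b, hab, hpow⟩ := Finite.exists_ne_map_eq_of_infinite (fun n : ℕ => s ^ (n + 1))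
  wlog hlt : a < b generalizing a b
  · exact this b a hab.symm hpow.symm (by omega)
  set m := a + 1 with hm
  set d := b - a with hd
  have hd1 : 0 < d := by omega
  have hkey : s ^ m = s ^ (m + d) := by
    simpa [hm, hd, show a + 1 + (b - a) = b + 1 by omega] using hpow
  have step : ∀ k, m ≤ k → s ^ k = s ^ (k + d) := by
    intro k hk
    have : s ^ k = s ^ (k - m) * s ^ m := by rw [← pow_add]; congr 1; omega
    rw [this, hkey, ← pow_add]
    congr 1; omega
  have hjump : ∀ j k, m ≤ k → s ^ k = s ^ (k + j * d) := by
    intro j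
    induction j with
    | zero => simp
    | succ j ih =>
      intro k hk
      rw [ih k hk, step (k + j * d) (by omega)]
      congr 1; ring
  refine ⟨m * d, by positivity, ?_⟩
  rw [← pow_add]
  exact (hjump m (m * d) (Nat.le_mul_of_pos_right m hd1)).symm

/-- If the (regular) 𝒥-class of an idempotent `e` is stable (i.e. `e^♯ 𝒥 e`),
then `e^♯ = e`. -/
theorem stable_class_stab_trivial {S : Type*} [Semigroup S] [PartialOrder S] [Fintype S]
    (stab : S → S) (h : IsStabSemigroup S stab)
    (e : S) (he : e * e = e) (hstable : Jrel (stab e) e) :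
    stab e = e := by
  set f := stab e with hfdef
  have hff : f * f = f := h.stab_idem e he
  -- consistency with a = b = e gives f = e * (f * e)
  have hf : f = e * (f * e) := by
    have := h.stab_consistent e e (by rw [he]; exact he) (by rw [he]; exact he)
    rwa [he] at this
  have hfe : f * e = f := by
    calc f * e = (e * (f * e)) * e := by rw [← hf]
      _ = e * (f * (e * e)) := by simp only [mul_assoc]
      _ = e * (f * e) := by rw [he]
      _ = f := hf.symm
  have hef : e * f = f := by
    calc e * f = e * (e * (f * e)) := by rw [← hf]
      _ = (e * e) * (f * e) := by rw [mul_assoc]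
      _ = e * (f * e) := by rw [he]
      _ = f := hf.symm
  -- move to the monoid `WithOne S`
  obtain ⟨u, v, huv⟩ := hstable.2
  have hfM : (f : WithOne S) = (e : WithOne S) * f * e := by
    rw [mul_assoc, ← WithOne.coe_mul, ← WithOne.coe_mul]
    exact congrArg _ hf
  have hfeM : (f : WithOne S) * e = f := by
    rw [← WithOne.coe_mul]; exact congrArg _ hfe
  have hefM : (e : WithOne S) * f = f := by
    rw [← WithOne.coe_mul]; exact congrArg _ hef
  have hffM : (f : WithOne S) * f = f := by
    rw [← WithOne.coe_mul]; exact congrArg _ hff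
  have heM : (e : WithOne S) * e = e := by
    rw [← WithOne.coe_mul]; exact congrArg _ he
  obtain ⟨s, hs⟩ : ∃ s : WithOne S, s = u * e * f := ⟨_, rfl⟩
  obtain ⟨t, ht⟩ : ∃ t : WithOne S, t = (e : WithOne S) * v := ⟨_, rfl⟩
  have heev : (e : WithOne S) * v = e * (e * v) := by rw [← mul_assoc, heM]
  have hset : (e : WithOne S) = s * e * t := by
    rw [hs, ht]
    calc (e : WithOne S) = u * f * v := huv
      _ = u * ((e : WithOne S) * f * e) * v := by rw [← hfM]
      _ = u * ((e : WithOne S) * (f * (e * v))) := by simp only [mul_assoc]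
      _ = u * ((e : WithOne S) * (f * (e * (e * v)))) := by
            conv_rhs => rw [← heev]
      _ = u * (e : WithOne S) * f * e * ((e : WithOne S) * v) := by simp only [mul_assoc]
  have hn : ∀ n : ℕ, (e : WithOne S) = s ^ n * e * t ^ n := by
    intro n
    induction n with
    | zero => simp
    | succ n ih =>
      calc (e : WithOne S) = s ^ n * e * t ^ n := ih
        _ = s ^ n * (s * e * t) * t ^ n := by rw [← hset]
        _ = (s ^ n * s) * e * (t * t ^ n) := by simp only [mul_assoc]
        _ = s ^ (n + 1) * e * t ^ (n + 1) := by rw [← pow_succ, ← pow_succ']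
  haveI : Finite (WithOne S) := inferInstanceAs (Finite (Option S))
  obtain ⟨N, hN, hNN⟩ := exists_idem_pow s
  have hsNe : s ^ N * e = e := by
    have h1 := hn N
    calc s ^ N * e = s ^ N * (s ^ N * e * t ^ N) := by rw [← h1]
      _ = (s ^ N * s ^ N) * e * t ^ N := by simp only [mul_assoc]
      _ = s ^ N * e * t ^ N := by rw [hNN]
      _ = e := h1.symm
  have hN1 : s ^ N = s ^ (N - 1) * s := by
    rw [← pow_succ]; congr 1; omega
  have hse : s * e = u * f := by
    rw [hs]
    calc u * (e : WithOne S) * f * e = u * ((e : WithOne S) * (f * e)) := by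
          simp only [mul_assoc]
      _ = u * ((e : WithOne S) * f) := by rw [hfeM]
      _ = u * f := by rw [hefM]
  have hepf : (e : WithOne S) = (s ^ (N - 1) * u) * f := by
    calc (e : WithOne S) = s ^ N * e := hsNe.symm
      _ = s ^ (N - 1) * (s * e) := by rw [hN1, mul_assoc]
      _ = s ^ (N - 1) * (u * f) := by rw [hse]
      _ = (s ^ (N - 1) * u) * f := by rw [mul_assoc]
  have h1 : (e : WithOne S) * f = e := by
    calc (e : WithOne S) * f = (s ^ (N - 1) * u) * f * f := by rw [← hepf]
      _ = (s ^ (N - 1) * u) * (f * f) := by rw [mul_assoc]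
      _ = (s ^ (N - 1) * u) * f := by rw [hffM]
      _ = e := hepf.symm
  exact WithOne.coe_inj.mp (hefM.symm.trans h1)
end

section
/- Let M be a stabilisation monoid and suppose E is an idempotent in the ideal power construction M_↓ (i.e., E ⊆ M is a downward-closed set with E·E = E where A·B = {a·b : a∈A, b∈B}↓). Then for every a ∈ E there exist b, c, e ∈ E with e idempotent in M such that a ≤ b·e·c. -/
/-- Axioms of a stabilisation monoid over a finite ordered monoid. -/
structure IsStabMonoid (M : Type*) [Monoid M] [PartialOrder M] [Fintype M]
    (stab : M → M) : Prop where
  mul_mono : ∀ a a' b b' : M, a ≤ a' → b ≤ b' → a * b ≤ a' * b'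
  stab_idem : ∀ e : M, e * e = e → stab e * stab e = stab e
  stab_mono : ∀ e f : M, e * e = e → f * f = f → e ≤ f → stab e ≤ stab f
  stab_consistent : ∀ a b : M, (a * b) * (a * b) = a * b → (b * a) * (b * a) = b * a →
    stab (a * b) = a * (stab (b * a) * b)
  stab_le : ∀ e : M, e * e = e → stab e ≤ e
  stab_stab : ∀ e : M, e * e = e → stab (stab e) = stab e
  stab_one : stab 1 = 1

/-- Product of ideals: the downward closure of the set of pairwise products. -/
def idealMul {M : Type*} [Monoid M] [PartialOrder M] (A B : Set M) : Set M :=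
  {z | ∃ a ∈ A, ∃ b ∈ B, z ≤ a * b}

/-- In a finite monoid, some positive power of any element is idempotent. -/
lemma exists_idem_pow_s14 {M : Type*} [Monoid M] [Fintype M] (t : M) :
    ∃ k ≥ 1, t ^ k * t ^ k = t ^ k := by
  obtain ⟨m, n, hmn, heq⟩ := Finite.exists_ne_map_eq_of_infinite (fun n : ℕ => t ^ (n + 1))
  -- wlog m < n
  have key : ∀ m d : ℕ, 1 ≤ d → t ^ (m + 1 + d) = t ^ (m + 1) →
      ∃ k ≥ 1, t ^ k * t ^ k = t ^ k := by
    intro m d hd hcyc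
    have step : ∀ j, m + 1 ≤ j → t ^ (j + d) = t ^ j := by
      intro j hj
      obtain ⟨r, rfl⟩ := Nat.exists_eq_add_of_le hj
      calc t ^ (m + 1 + r + d) = t ^ (m + 1 + d) * t ^ r := by
            rw [← pow_add]; ring_nf
        _ = t ^ (m + 1) * t ^ r := by rw [hcyc]
        _ = t ^ (m + 1 + r) := by rw [← pow_add]
    have iter : ∀ k j, m + 1 ≤ j → t ^ (j + k * d) = t ^ j := by
      intro k
      induction k with
      | zero => simp
      | succ k ih =>
        intro j hj
        have : j + (k + 1) * d = (j + d) + k * d := by ring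
        rw [this, ih _ (le_trans hj (Nat.le_add_right _ _)), step _ hj]
    refine ⟨(m + 1) * d, Nat.one_le_iff_ne_zero.2 (by positivity), ?_⟩
    rw [← pow_add]
    have h1 : (m + 1) * d + (m + 1) * d = (m + 1) * d + (m + 1) * d := rfl
    have hge : m + 1 ≤ (m + 1) * d := Nat.le_mul_of_pos_right _ hd
    exact iter (m + 1) _ hge
  rcases Nat.lt_or_ge m n with hlt | hge
  · obtain ⟨d, hd, rfl⟩ : ∃ d, 1 ≤ d ∧ n = m + d :=
      ⟨n - m, by omega, by omega⟩
    exact key m d hd (by rw [show m + 1 + d = m + d + 1 by ring, ← heq])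
  · have hlt : n < m := lt_of_le_of_ne hge (Ne.symm hmn)
    obtain ⟨d, hd, rfl⟩ : ∃ d, 1 ≤ d ∧ m = n + d :=
      ⟨m - n, by omega, by omega⟩
    exact key n d hd (by rw [show n + 1 + d = n + d + 1 by ring, heq])

/-- If `E` is an idempotent ideal (downward-closed set with `E·E = E`) in the ideal
construction over a stabilisation monoid `M`, then every `a ∈ E` satisfies
`a ≤ b·e·c` for some `b, c, e ∈ E` with `e` idempotent. -/
theorem ideal_idempotent_structure {M : Type*} [Monoid M] [PartialOrder M] [Fintype M]
    (stab : M → M) (h : IsStabMonoid M stab)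
    (E : Set M) (hdown : ∀ x y : M, x ≤ y → y ∈ E → x ∈ E)
    (hidem : idealMul E E = E) :
    ∀ a ∈ E, ∃ b ∈ E, ∃ c ∈ E, ∃ e ∈ E, e * e = e ∧ a ≤ b * (e * c) := by
  intro a ha
  -- closure of E under multiplication
  have hmulE : ∀ x ∈ E, ∀ y ∈ E, x * y ∈ E := by
    intro x hx y hy
    rw [← hidem]
    exact ⟨x, hx, y, hy, le_refl _⟩
  -- splitting elements of E
  have hsplit : ∀ x ∈ E, ∃ b ∈ E, ∃ c ∈ E, x ≤ b * c := by
    intro x hx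
    rw [← hidem] at hx
    exact hx
  -- products of nonempty lists of elements of E are in E
  have hlistE : ∀ l : List M, l ≠ [] → (∀ x ∈ l, x ∈ E) → l.prod ∈ E := by
    intro l
    induction l with
    | nil => intro hne; exact absurd rfl hne
    | cons x xs ih =>
      intro _ hall
      rcases xs with _ | ⟨y, ys⟩
      · simpa using hall x (by simp)
      · rw [List.prod_cons]
        exact hmulE x (hall x (by simp)) _
          (ih (by simp) (fun z hz => hall z (List.mem_cons_of_mem _ hz)))
  -- positive powers of elements of E are in E
  have hpowE : ∀ t ∈ E, ∀ k, 1 ≤ k → t ^ k ∈ E := by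
    intro t ht k
    induction k with
    | zero => omega
    | succ k ih =>
      intro _
      rcases Nat.eq_or_lt_of_le (Nat.zero_le k) with hk | hk
      · simpa [← hk] using ht
      · rw [pow_succ]
        exact hmulE _ (ih hk) t ht
  -- long factorizations
  have hfact : ∀ n : ℕ, ∃ l : List M, l.length = n ∧ (∀ x ∈ l, x ∈ E) ∧
      ∃ c ∈ E, a ≤ l.prod * c := by
    intro n
    induction n with
    | zero => exact ⟨[], rfl, by simp, a, ha, by simp⟩
    | succ n ih =>
      obtain ⟨l, hlen, hall, c, hc, hle⟩ := ih
      obtain ⟨b', hb', c', hc', hbc⟩ := hsplit c hc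
      refine ⟨l ++ [b'], by simp [hlen], ?_, c', hc', ?_⟩
      · intro x hx
        rcases List.mem_append.1 hx with hx | hx
        · exact hall x hx
        · simpa using (List.mem_singleton.1 hx) ▸ hb'
      · calc a ≤ l.prod * c := hle
          _ ≤ l.prod * (b' * c') := h.mul_mono _ _ _ _ (le_refl _) hbc
          _ = (l ++ [b']).prod * c' := by simp [mul_assoc]
  set N := Fintype.card M with hN
  obtain ⟨l, hlen, hall, c, hc, hle⟩ := hfact (N + 1)
  -- pigeonhole on prefix products
  have hcard : Fintype.card (Fin (N + 2)) > Fintype.card M := by simp [hN]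
  obtain ⟨i, j, hij, heq⟩ := Fintype.exists_ne_map_eq_of_card_lt
    (fun i : Fin (N + 2) => (l.take (i : ℕ)).prod) (by simpa using hcard)
  -- wlog i < j
  wlog hlt : (i : ℕ) < (j : ℕ) generalizing i j
  · refine this j i hij.symm heq.symm ?_
    have hne : (i : ℕ) ≠ (j : ℕ) := fun hh => hij (Fin.ext hh)
    omega
  have hjle : (j : ℕ) ≤ l.length := by rw [hlen]; omega
  -- decompose: take j = take i ++ middle
  set t : M := ((l.drop (i : ℕ)).take ((j : ℕ) - (i : ℕ))).prod with ht
  have hmidlen : ((l.drop (i : ℕ)).take ((j : ℕ) - (i : ℕ))).length = (j : ℕ) - (i : ℕ) := by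
    rw [List.length_take, List.length_drop, hlen]; omega
  have htakej : (l.take (j : ℕ)).prod = (l.take (i : ℕ)).prod * t := by
    have : l.take (j : ℕ) = l.take (i : ℕ) ++ (l.drop (i : ℕ)).take ((j : ℕ) - (i : ℕ)) := by
      rw [← List.take_add]
      congr 1
      omega
    rw [this, List.prod_append]
  set q : M := (l.take (i : ℕ)).prod with hq
  have hqt : q * t = q := by
    have := htakej
    rw [← heq] at this
    exact this.symm
  -- t is in E
  have htE : t ∈ E := by
    apply hlistE
    · intro hnil
      have := hmidlen
      rw [hnil] at this
      simp at this
      omega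
    · intro x hx
      exact hall x (List.mem_of_mem_drop (List.mem_of_mem_take hx))
  -- idempotent power of t
  obtain ⟨k, hk1, hkidem⟩ := exists_idem_pow_s14 t
  have heE : t ^ k ∈ E := hpowE t htE k hk1
  have hqtk : ∀ k, q * t ^ k = q := by
    intro k
    induction k with
    | zero => simp
    | succ k ih => rw [pow_succ, ← mul_assoc, ih, hqt]
  -- q is in E
  have hqE : q ∈ E := by
    rcases Nat.eq_zero_or_pos (i : ℕ) with hi0 | hipos
    · -- q = 1 = prod of take j which is nonempty
      rw [heq]
      apply hlistE
      · intro hnil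
        have : (l.take (j : ℕ)).length = (j : ℕ) := by
          rw [List.length_take, hlen]; omega
        rw [hnil] at this
        simp at this
        omega
      · intro x hx
        exact hall x (List.mem_of_mem_take hx)
    · apply hlistE
      · intro hnil
        have : (l.take (i : ℕ)).length = (i : ℕ) := by
          rw [List.length_take, hlen]; omega
        rw [hnil] at this
        simp at this
        omega
      · intro x hx
        exact hall x (List.mem_of_mem_take hx)
  -- the tail: drop j followed by c
  have hrest : (l.drop (j : ℕ)).prod * c ∈ E := by
    rcases eq_or_ne (l.drop (j : ℕ)) [] with hnil | hne
    · rw [hnil]; simpa using hc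
    · exact hmulE _ (hlistE _ hne (fun x hx => hall x (List.mem_of_mem_drop hx))) c hc
  -- final assembly
  refine ⟨q, hqE, (l.drop (j : ℕ)).prod * c, hrest, t ^ k, heE, hkidem, ?_⟩
  calc a ≤ l.prod * c := hle
    _ = (l.take (j : ℕ)).prod * ((l.drop (j : ℕ)).prod * c) := by
        rw [← mul_assoc, List.prod_take_mul_prod_drop]
    _ = q * ((l.drop (j : ℕ)).prod * c) := by rw [htakej, hqt]
    _ = (q * t ^ k) * ((l.drop (j : ℕ)).prod * c) := by rw [hqtk k]
    _ = q * (t ^ k * ((l.drop (j : ℕ)).prod * c)) := by rw [mul_assoc]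
end

section
/- Let M be a stabilisation monoid and E an idempotent co-ideal in the co-ideal power construction M_↑ (E ⊆ M upward-closed with E·E = E, where A·B = {a·b : a∈A, b∈B}↑). Then for every a ∈ E there exist b, c, e ∈ E with e idempotent such that a ≥ b·e·c. -/
/-- Product of co-ideals: the upward closure of the set of pairwise products. -/
def coidealMul {M : Type*} [Monoid M] [PartialOrder M] (A B : Set M) : Set M :=
  {z | ∃ a ∈ A, ∃ b ∈ B, a * b ≤ z}

theorem exists_idempotent_mem_of_finite {M : Type*} [Semigroup M] [Finite M] {s : Set M}
    (hs : s.Nonempty) (hmul : ∀ x ∈ s, ∀ y ∈ s, x * y ∈ s) : ∃ e ∈ s, e * e = e := by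
  let : TopologicalSpace M := ⊥
  have : DiscreteTopology M := ⟨rfl⟩
  exact exists_idempotent_in_compact_subsemigroup (fun _ => continuous_of_discreteTopology) s hs
    s.toFinite.isCompact hmul

theorem exists_mul_eq_self_of_forall_exists_mul_mem {M : Type*} [Semigroup M] [Finite M]
    {E F : Set M} (hE : ∀ x ∈ E, ∀ y ∈ E, x * y ∈ E) (hF : F.Nonempty)
    (hstep : ∀ p ∈ F, ∃ u ∈ E, p * u ∈ F) : ∃ r ∈ F, ∃ s ∈ E, r * s = r := by
  let successors (p : M) : Set M := {q ∈ F | ∃ s ∈ E, p * s = q}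
  obtain ⟨p, hpF, hmin⟩ := exists_minimalFor_of_wellFoundedLT (· ∈ F) successors hF
  obtain ⟨u, hu, hpu⟩ := hstep p hpF
  have hsub : successors (p * u) ⊆ successors p := fun q ⟨hq, s, hs, hqs⟩ =>
    ⟨hq, u * s, hE u hu s hs, by rw [← mul_assoc, hqs]⟩
  obtain ⟨-, s, hs, hpus⟩ := hmin hpu hsub ⟨hpu, u, hu, rfl⟩
  exact ⟨p * u, hpu, s, hs, hpus⟩

section coidealMul

variable {M : Type*} [Monoid M] [PartialOrder M] {E : Set M}

theorem mul_mem_of_coidealMul_self_eq (hidem : coidealMul E E = E) {x y : M} (hx : x ∈ E)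
    (hy : y ∈ E) : x * y ∈ E :=
  hidem ▸ ⟨x, hx, y, hy, le_rfl⟩

theorem exists_mul_le_of_coidealMul_self_eq (hidem : coidealMul E E = E) {z : M} (hz : z ∈ E) :
    ∃ u ∈ E, ∃ v ∈ E, u * v ≤ z := by
  rw [← hidem] at hz
  exact hz

end coidealMul

theorem coideal_idempotent_structure_general {M : Type*} [Monoid M] [PartialOrder M] [Fintype M]
    (stab : M → M) (h : IsStabMonoid M stab)
    (E : Set M)
    (hidem : coidealMul E E = E) :
    ∀ a ∈ E, ∃ b ∈ E, ∃ c ∈ E, ∃ e ∈ E, e * e = e ∧ b * (e * c) ≤ a := by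
  intro a ha
  have hmul : ∀ x ∈ E, ∀ y ∈ E, x * y ∈ E := fun x hx y hy =>
    mul_mem_of_coidealMul_self_eq hidem hx hy
  let prefixes : Set M := {p ∈ E | ∃ z ∈ E, p * z ≤ a}
  have hprefixes : prefixes.Nonempty := by
    obtain ⟨u, hu, v, hv, huv⟩ := exists_mul_le_of_coidealMul_self_eq hidem ha
    exact ⟨u, hu, v, hv, huv⟩
  have hstep : ∀ p ∈ prefixes, ∃ u ∈ E, p * u ∈ prefixes := by
    rintro p ⟨hp, z, hz, hpz⟩
    obtain ⟨u, hu, v, hv, huv⟩ := exists_mul_le_of_coidealMul_self_eq hidem hz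
    refine ⟨u, hu, hmul p hp u hu, v, hv, ?_⟩
    rw [mul_assoc]
    exact (h.mul_mono _ _ _ _ le_rfl huv).trans hpz
  obtain ⟨r, ⟨hr, z, hz, hrz⟩, s, hs, hrs⟩ :=
    exists_mul_eq_self_of_forall_exists_mul_mem hmul hprefixes hstep
  obtain ⟨e, ⟨he, hre⟩, hee⟩ := exists_idempotent_mem_of_finite (s := {x ∈ E | r * x = r})
    ⟨s, hs, hrs⟩ fun x ⟨hx, hrx⟩ y ⟨hy, hry⟩ => ⟨hmul x hx y hy, by rw [← mul_assoc, hrx, hry]⟩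
  exact ⟨r, hr, z, hz, e, he, hee, by rwa [← mul_assoc, hre]⟩

/-- If `E` is an idempotent co-ideal (upward-closed set with `E·E = E`) in the
co-ideal construction over a stabilisation monoid `M`, then every `a ∈ E`
satisfies `b·e·c ≤ a` for some `b, c, e ∈ E` with `e` idempotent. -/
theorem coideal_idempotent_structure {M : Type*} [Monoid M] [PartialOrder M] [Fintype M]
    (stab : M → M) (h : IsStabMonoid M stab)
    (E : Set M) (hup : ∀ x y : M, x ≤ y → x ∈ E → y ∈ E)
    (hidem : coidealMul E E = E) :
    ∀ a ∈ E, ∃ b ∈ E, ∃ c ∈ E, ∃ e ∈ E, e * e = e ∧ b * (e * c) ≤ a :=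
  coideal_idempotent_structure_general stab h E hidem
end

section
/- For every n-over-computation of value b over a word b_1⋯b_k ∈ M^+ (k ≥ 1) such that e ≤ b_i for all i, where e is an idempotent of M, one has e^♯ ≤ b. -/
/-- Ordered unranked trees labelled by `M`. -/
inductive CTree (M : Type*) where
  | node : M → List (CTree M) → CTree M

/-- The value (root label) of a tree. -/
def CTree.value {M : Type*} : CTree M → M
  | .node v _ => v

/-- `IsOverComp stab n T u` : `T` is an `n`-over-computation for the word `u`.
Leaves are labelled `≥` the corresponding letter; binary nodes `≥` the product of
the children's values; idempotent nodes (degree `2..n`, children of equal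
idempotent value `e`) are labelled `≥ e`; stabilisation nodes (degree `> n`) are
labelled `≥ e^♯`. -/
inductive IsOverComp {M : Type*} [Monoid M] [PartialOrder M] (stab : M → M)
    (n : ℕ) : CTree M → List M → Prop
  | leaf {a v : M} : a ≤ v → IsOverComp stab n (.node v []) [a]
  | binary {v : M} {t₁ t₂ : CTree M} {u₁ u₂ : List M} :
      IsOverComp stab n t₁ u₁ → IsOverComp stab n t₂ u₂ →
      t₁.value * t₂.value ≤ v →
      IsOverComp stab n (.node v [t₁, t₂]) (u₁ ++ u₂)
  | idem {v e : M} {ps : List (CTree M × List M)} :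
      2 ≤ ps.length → ps.length ≤ n → e * e = e →
      (∀ p ∈ ps, (p.1).value = e) →
      (∀ p ∈ ps, IsOverComp stab n p.1 p.2) →
      e ≤ v →
      IsOverComp stab n (.node v (ps.map Prod.fst)) ((ps.map Prod.snd).flatten)
  | stabilisation {v e : M} {ps : List (CTree M × List M)} :
      n < ps.length → e * e = e →
      (∀ p ∈ ps, (p.1).value = e) →
      (∀ p ∈ ps, IsOverComp stab n p.1 p.2) →
      stab e ≤ v →
      IsOverComp stab n (.node v (ps.map Prod.fst)) ((ps.map Prod.snd).flatten)


theorem stab_le_overComp_value_aux {M : Type*} [Monoid M] [PartialOrder M] [Fintype M]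
    (stab : M → M) (h : IsStabMonoid M stab) (n : ℕ)
    (e : M) (he : e * e = e) :
    ∀ (T : CTree M) (u : List M), IsOverComp stab n T u → (∀ b ∈ u, e ≤ b) →
      stab e ≤ T.value := by
  intro T u hT
  induction hT with
  | @leaf a v hav =>
    intro hle
    exact le_trans (h.stab_le e he) (le_trans (hle a (by simp)) hav)
  | @binary v t₁ t₂ u₁ u₂ h₁ h₂ hmul ih₁ ih₂ =>
    intro hle
    have hl1 : ∀ b ∈ u₁, e ≤ b := fun b hb => hle b (List.mem_append_left _ hb)
    have hl2 : ∀ b ∈ u₂, e ≤ b := fun b hb => hle b (List.mem_append_right _ hb)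
    calc stab e = stab e * stab e := (h.stab_idem e he).symm
      _ ≤ t₁.value * t₂.value := h.mul_mono _ _ _ _ (ih₁ hl1) (ih₂ hl2)
      _ ≤ v := hmul
  | @idem v f ps h2 hn hf hval hcomp hfv ih =>
    intro hle
    obtain ⟨p, hp⟩ : ∃ p, p ∈ ps := by
      cases ps with
      | nil => simp at h2
      | cons a l => exact ⟨a, by simp⟩
    have hlep : ∀ b ∈ p.2, e ≤ b := fun b hb =>
      hle b (by
        simp only [List.mem_flatten, List.mem_map]
        exact ⟨p.2, ⟨p, hp, rfl⟩, hb⟩)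
    have := ih p hp hlep
    rw [hval p hp] at this
    exact le_trans this hfv
  | @stabilisation v f ps hn hf hval hcomp hfv ih =>
    intro hle
    obtain ⟨p, hp⟩ : ∃ p, p ∈ ps := by
      cases ps with
      | nil => simp at hn
      | cons a l => exact ⟨a, by simp⟩
    have hlep : ∀ b ∈ p.2, e ≤ b := fun b hb =>
      hle b (by
        simp only [List.mem_flatten, List.mem_map]
        exact ⟨p.2, ⟨p, hp, rfl⟩, hb⟩)
    have hse : stab e ≤ f := by
      have := ih p hp hlep
      rwa [hval p hp] at this
    have : stab (stab e) ≤ stab f := h.stab_mono _ _ (h.stab_idem e he) hf hse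
    rw [h.stab_stab e he] at this
    exact le_trans this hfv

/-- For every `n`-over-computation of value `b` over a word `b₁⋯b_k` (`k ≥ 1`)
with `e ≤ b_i` for all `i`, where `e` is idempotent, one has `e^♯ ≤ b`. -/
theorem stab_le_overComp_value {M : Type*} [Monoid M] [PartialOrder M] [Fintype M]
    (stab : M → M) (h : IsStabMonoid M stab) (n : ℕ)
    (T : CTree M) (u : List M) (e : M) (he : e * e = e)
    (hu : u ≠ []) (hle : ∀ b ∈ u, e ≤ b)
    (hT : IsOverComp stab n T u) :
    stab e ≤ T.value := by
  exact stab_le_overComp_value_aux stab h n e he T u hT hle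
end
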